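/- Suppose along an infinite set K ⊆ ℕ the limits γ_j = lim_{k ∈ K} q_{k+j}/q_k and δ_j = lim_{k ∈ K} η_{k+j}/η_k exist for all j ≥ 0 with γ_1, δ_1 finite. Then for every j ≥ 0, lim_{k ∈ K} q_k (η_{k+j} + η_{k+j+1}) = (δ_j + δ_{j+1})/(γ_1 + δ_1). -/

import Mathlib

open MeasureTheory Filter Set Topology

/-- Iterates of the Gauss map starting at `α`; `cfTail α k` has continued
fraction expansion `[c_{k+1}, c_{k+2}, ...]` when `α = [c_1, c_2, ...]`. -/
noncomputable def cfTail (α : ℝ) : ℕ → ℝ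
  | 0 => α
  | n + 1 => Int.fract (1 / cfTail α n)

/-- `cfC α k` is the partial quotient `c_{k+1}` of the continued fraction of `α`. -/
noncomputable def cfC (α : ℝ) (k : ℕ) : ℤ := ⌊1 / cfTail α k⌋

/-- Numerators of the convergents: `p 0 = 0`, `p 1 = 1`, `p k = c_k p_{k-1} + p_{k-2}`. -/
noncomputable def cfP (α : ℝ) : ℕ → ℤ
  | 0 => 0
  | 1 => 1
  | k + 2 => cfC α (k + 1) * cfP α (k + 1) + cfP α k

/-- Denominators of the convergents: `q 0 = 1`, `q 1 = c_1`, `q k = c_k q_{k-1} + q_{k-2}`. -/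
noncomputable def cfQ (α : ℝ) : ℕ → ℤ
  | 0 => 1
  | 1 => cfC α 0
  | k + 2 => cfC α (k + 1) * cfQ α (k + 1) + cfQ α k

/-- `η_k = |q_k α - p_k|`. -/
noncomputable def cfEta (α : ℝ) (k : ℕ) : ℝ := |(cfQ α k : ℝ) * α - (cfP α k : ℝ)|

/-!
Dividing the classical identity `q_{k+1} η_k + q_k η_{k+1} = 1` by `q_k η_k` gives
`q_k x = (x / η_k) / (q_{k+1} / q_k + η_{k+1} / η_k)` for every `x`. Taking
`x = η_{k+j} + η_{k+j+1}`, numerator and denominator converge along `K` to `δ_j + δ_{j+1}` and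
`γ_1 + δ_1 ≥ 1`. The identity itself comes from the determinant identity for convergents
together with `q_{k+1} α - p_{k+1} = -T^{k+1}(α) (q_k α - p_k)`, `T` the Gauss map.
-/

variable {α : ℝ}

lemma cfTail_succ_irrational_and_mem_Ioo (hirr : Irrational α) (k : ℕ) :
    Irrational (cfTail α (k + 1)) ∧ cfTail α (k + 1) ∈ Set.Ioo (0 : ℝ) 1 := by
  have hprev : Irrational (cfTail α k) := by
    cases k with
    | zero => exact hirr
    | succ k => exact (cfTail_succ_irrational_and_mem_Ioo hirr k).1
  have hsucc : Irrational (cfTail α (k + 1)) := by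
    simpa only [cfTail, Int.fract, one_div] using hprev.inv.sub_intCast _
  refine ⟨hsucc, ?_, Int.fract_lt_one _⟩
  exact (Int.fract_nonneg _).lt_of_ne hsucc.ne_zero.symm

lemma cfTail_mem_Ioo (hirr : Irrational α) (hα : α ∈ Set.Ioo (0 : ℝ) 1) (k : ℕ) :
    cfTail α k ∈ Set.Ioo (0 : ℝ) 1 := by
  cases k with
  | zero => exact hα
  | succ k => exact (cfTail_succ_irrational_and_mem_Ioo hirr k).2

lemma one_le_cfC (hirr : Irrational α) (hα : α ∈ Set.Ioo (0 : ℝ) 1) (k : ℕ) : 1 ≤ cfC α k := by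
  obtain ⟨h0, h1⟩ := cfTail_mem_Ioo hirr hα k
  exact Int.le_floor.2 (by rw [Int.cast_one, le_div_iff₀ h0]; linarith)

lemma one_le_cfQ (hirr : Irrational α) (hα : α ∈ Set.Ioo (0 : ℝ) 1) (k : ℕ) : 1 ≤ cfQ α k := by
  induction k using Nat.twoStepInduction with
  | zero => exact le_rfl
  | one => exact one_le_cfC hirr hα 0
  | more k hk hk1 =>
    have hc := one_le_cfC hirr hα (k + 1)
    simp only [cfQ]
    nlinarith

lemma cfQ_le_cfQ_succ (hirr : Irrational α) (hα : α ∈ Set.Ioo (0 : ℝ) 1) (k : ℕ) :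
    cfQ α k ≤ cfQ α (k + 1) := by
  cases k with
  | zero => exact one_le_cfC hirr hα 0
  | succ k =>
    have hc := one_le_cfC hirr hα (k + 1)
    have hq := one_le_cfQ hirr hα k
    have hq1 := one_le_cfQ hirr hα (k + 1)
    simp only [cfQ]
    nlinarith

lemma cfP_mul_cfQ_sub_cfP_mul_cfQ (α : ℝ) (k : ℕ) :
    cfP α (k + 1) * cfQ α k - cfP α k * cfQ α (k + 1) = (-1) ^ k := by
  induction k with
  | zero => simp [cfP, cfQ]
  | succ k ih =>
    simp only [cfP, cfQ]
    linear_combination (-1 : ℤ) * ih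

noncomputable def cfErr (α : ℝ) (k : ℕ) : ℝ := (cfQ α k : ℝ) * α - (cfP α k : ℝ)

lemma cfErr_succ (hirr : Irrational α) (k : ℕ) :
    cfErr α (k + 1) = -cfTail α (k + 1) * cfErr α k := by
  induction k with
  | zero =>
    have hα0 : α ≠ 0 := hirr.ne_zero
    simp only [cfErr, cfTail, cfQ, cfP, cfC, Int.fract]
    field_simp
    push_cast
    ring
  | succ k ih =>
    have ht : cfTail α (k + 1) ≠ 0 := (cfTail_succ_irrational_and_mem_Ioo hirr k).2.1.ne'
    have hT : cfTail α (k + 2) = 1 / cfTail α (k + 1) - cfC α (k + 1) := rfl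
    have hErr : cfErr α (k + 2) = cfC α (k + 1) * cfErr α (k + 1) + cfErr α k := by
      simp only [cfErr, cfQ, cfP]
      push_cast
      ring
    rw [hErr, hT, ih]
    field_simp
    ring

lemma cfEta_eq_abs_cfErr (α : ℝ) (k : ℕ) : cfEta α k = |cfErr α k| := rfl

lemma cfEta_succ (hirr : Irrational α) (k : ℕ) :
    cfEta α (k + 1) = cfTail α (k + 1) * cfEta α k := by
  rw [cfEta_eq_abs_cfErr, cfErr_succ hirr, abs_mul, abs_neg,
    abs_of_pos (cfTail_succ_irrational_and_mem_Ioo hirr k).2.1, cfEta_eq_abs_cfErr]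

lemma cfEta_pos (hirr : Irrational α) (k : ℕ) : 0 < cfEta α k := by
  induction k with
  | zero => simpa [cfEta, cfQ, cfP] using hirr.ne_zero
  | succ k ih =>
    rw [cfEta_succ hirr]
    exact mul_pos (cfTail_succ_irrational_and_mem_Ioo hirr k).2.1 ih

lemma cfQ_succ_mul_cfEta_add_cfQ_mul_cfEta_succ (hirr : Irrational α)
    (hα : α ∈ Set.Ioo (0 : ℝ) 1) (k : ℕ) :
    (cfQ α (k + 1) : ℝ) * cfEta α k + cfQ α k * cfEta α (k + 1) = 1 := by
  have hdet : (cfQ α (k + 1) : ℝ) * cfErr α k - cfQ α k * cfErr α (k + 1) = (-1) ^ k := by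
    have := congrArg (Int.cast : ℤ → ℝ) (cfP_mul_cfQ_sub_cfP_mul_cfQ α k)
    push_cast at this
    rw [← this, cfErr, cfErr]
    ring
  have hnonneg : 0 ≤ (cfQ α (k + 1) : ℝ) + cfQ α k * cfTail α (k + 1) := by
    have hq := one_le_cfQ hirr hα k
    have hq1 := one_le_cfQ hirr hα (k + 1)
    have ht := (cfTail_mem_Ioo hirr hα (k + 1)).1
    positivity
  -- `q_k α - p_k` alternates in sign, so the two terms of the determinant add up in absolute value
  calc (cfQ α (k + 1) : ℝ) * cfEta α k + cfQ α k * cfEta α (k + 1)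
      = |((cfQ α (k + 1) : ℝ) + cfQ α k * cfTail α (k + 1)) * cfErr α k| := by
        rw [abs_mul, abs_of_nonneg hnonneg, cfEta_succ hirr, cfEta_eq_abs_cfErr]
        ring
    _ = |(cfQ α (k + 1) : ℝ) * cfErr α k - cfQ α k * cfErr α (k + 1)| := by
        rw [cfErr_succ hirr]
        ring_nf
    _ = 1 := by rw [hdet, abs_pow, abs_neg, abs_one, one_pow]

lemma cfQ_mul_eq_div (hirr : Irrational α) (hα : α ∈ Set.Ioo (0 : ℝ) 1) (k : ℕ) (x : ℝ) :
    (cfQ α k : ℝ) * x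
      = (x / cfEta α k) / ((cfQ α (k + 1) : ℝ) / cfQ α k + cfEta α (k + 1) / cfEta α k) := by
  have hq : (0 : ℝ) < cfQ α k := by exact_mod_cast one_le_cfQ hirr hα k
  have hη := cfEta_pos hirr k
  rw [div_add_div _ _ hq.ne' hη.ne', mul_comm (cfQ α k : ℝ) (cfEta α k),
    cfQ_succ_mul_cfEta_add_cfQ_mul_cfEta_succ hirr hα k]
  field_simp

theorem stmt9 (α : ℝ) (hirr : Irrational α) (hα : α ∈ Set.Ioo (0 : ℝ) 1)
    (K : Set ℕ) (hK : K.Infinite) (γ δ : ℕ → ℝ)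
    (hγ : ∀ j : ℕ, Tendsto (fun k => (cfQ α (k + j) : ℝ) / (cfQ α k : ℝ))
      (atTop ⊓ 𝓟 K) (𝓝 (γ j)))
    (hδ : ∀ j : ℕ, Tendsto (fun k => cfEta α (k + j) / cfEta α k)
      (atTop ⊓ 𝓟 K) (𝓝 (δ j)))
    (j : ℕ) :
    Tendsto (fun k => (cfQ α k : ℝ) * (cfEta α (k + j) + cfEta α (k + j + 1)))
      (atTop ⊓ 𝓟 K) (𝓝 ((δ j + δ (j + 1)) / (γ 1 + δ 1))) := by
  have : (atTop ⊓ 𝓟 K).NeBot :=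
    frequently_iff_neBot.mp (Nat.frequently_atTop_iff_infinite.mpr hK)
  have hγ1 : 1 ≤ γ 1 := ge_of_tendsto' (hγ 1) fun k => by
    have hq : (0 : ℝ) < cfQ α k := by exact_mod_cast one_le_cfQ hirr hα k
    rw [le_div_iff₀ hq, one_mul]
    exact_mod_cast cfQ_le_cfQ_succ hirr hα k
  have hδ1 : 0 ≤ δ 1 := ge_of_tendsto' (hδ 1) fun k =>
    div_nonneg (cfEta_pos hirr _).le (cfEta_pos hirr _).le
  have hlim := ((hδ j).add (hδ (j + 1))).div ((hγ 1).add (hδ 1)) (by linarith)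
  refine hlim.congr fun k => ?_
  rw [Pi.div_apply, cfQ_mul_eq_div hirr hα, ← add_div, add_assoc k j 1]
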